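/- Let (X,d) be a separable metric space with the Heine–Borel property, 1 ≤ p < ∞, and μ ∈ P_p(X). Let Y_1, Y_2, … be i.i.d. X-valued random elements with common distribution μ, and let bar μ_n := (1/n)∑_{i=1}^n δ_{Y_i}. Then, almost surely, ρ(F_p(bar μ_n), F_p(μ)) → 0 and ρ(F_p^*(bar μ_n), F_p^*(μ)) → 0 as n → ∞; i.e., the strong law of large numbers for Fréchet p-means and restricted Fréchet p-means holds in the Hausdorff upper topology. -/

import Mathlib

/-!
By the strong law of large numbers, almost surely the empirical Fréchet functions `fp p μ̄ₙ`
converge to `fp p μ` on a countable dense set, and their local Lipschitz constants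
`p ∫ (d(x₀, y) + R) ^ (p - 1) dμ̄ₙ(y)` on the balls `closedBall x₀ R` converge as well, hence stay
bounded. The functions are therefore equicontinuous and converge locally uniformly. Positive mass near a point of
`supp μ` puts every sublevel set of `fp p μ̄ₙ`, for all large `n`, into one closed ball, which is
compact by the Heine–Borel property. Under locally uniform, equicoercive convergence, minimisers of
`fₙ` over `Sₙ ⊆ S` end up close to the minimisers of the limit over `S`, provided a minimiser of the
limit is a limit of points of `Sₙ`. For `Sₙ = supp μ̄ₙ ⊆ supp μ`, the sample points supply such
points, since they come arbitrarily close to every point of `supp μ`.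
-/

open MeasureTheory Filter Topology ProbabilityTheory

/-- `f_p(μ,x) := ∫ d(x,y)^p dμ(y)`. -/
noncomputable def fp {X : Type*} [MetricSpace X] [MeasurableSpace X]
    (p : ℝ) (μ : Measure X) (x : X) : ℝ :=
  ∫ y, dist x y ^ p ∂μ

/-- Membership in `P_p(X)`. -/
def MemPp {X : Type*} [MetricSpace X] [MeasurableSpace X] (p : ℝ) (μ : Measure X) : Prop :=
  ∀ x : X, Integrable (fun y => dist x y ^ p) μ

/-- Weak convergence of a sequence of Borel measures. -/
def WeakConv {X : Type*} [MetricSpace X] [MeasurableSpace X]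
    (μs : ℕ → Measure X) (μ : Measure X) : Prop :=
  ∀ g : BoundedContinuousFunction X ℝ,
    Tendsto (fun n => ∫ y, g y ∂(μs n)) atTop (𝓝 (∫ y, g y ∂μ))

/-- Convergence in `τ_w^p`. -/
def TauWp {X : Type*} [MetricSpace X] [MeasurableSpace X]
    (p : ℝ) (μs : ℕ → Measure X) (μ : Measure X) : Prop :=
  WeakConv μs μ ∧ ∀ x : X, Tendsto (fun n => fp p (μs n) x) atTop (𝓝 (fp p μ x))

/-- Joint Fréchet p-mean `F_p(μ,C)`. -/
def Fp {X : Type*} [MetricSpace X] [MeasurableSpace X]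
    (p : ℝ) (μ : Measure X) (C : Set X) : Set X :=
  {x ∈ C | ∀ x' ∈ C, fp p μ x ≤ fp p μ x'}

/-- Support of a measure. -/
def msupport {X : Type*} [MetricSpace X] [MeasurableSpace X] (μ : Measure X) : Set X :=
  {x : X | ∀ U : Set X, IsOpen U → x ∈ U → 0 < μ U}

/-- Kuratowski upper limit. -/
def KurLs {X : Type*} [MetricSpace X] (C : ℕ → Set X) : Set X :=
  ⋂ n, closure (⋃ m, ⋃ (_ : n ≤ m), C m)

/-- Kuratowski lower limit. -/
def KurLi {X : Type*} [MetricSpace X] (C : ℕ → Set X) : Set X :=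
  {x : X | ∀ ε : ℝ, 0 < ε → ∀ᶠ n in atTop, ∃ y ∈ C n, dist x y < ε}

/-- One-sided Hausdorff distance `ρ(C,C') = max_{x ∈ C} min_{x' ∈ C'} d(x,x')`. -/
noncomputable def rho {X : Type*} [MetricSpace X] (C C' : Set X) : ℝ :=
  ⨆ x ∈ C, Metric.infDist x C'

/-- Empirical measure of the first `n` samples. -/
noncomputable def empMeasure {X Ω : Type*} [MeasurableSpace X]
    (Y : ℕ → Ω → X) (n : ℕ) (ω : Ω) : Measure X :=
  (n : ENNReal)⁻¹ • ∑ i ∈ Finset.range n, Measure.dirac (Y i ω)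

/-- Effros σ-algebra on subsets of `X`. -/
def effros (X : Type*) [TopologicalSpace X] : MeasurableSpace (Set X) :=
  MeasurableSpace.generateFrom
    {S : Set (Set X) | ∃ U : Set X, IsOpen U ∧ S = {C : Set X | (C ∩ U).Nonempty}}

/-- The relation `x ⇝_μ x'`. -/
def LeadsTo {X : Type*} [MetricSpace X] [MeasurableSpace X] (μ : Measure X) (x x' : X) : Prop :=
  ∃ ε₀ > (0 : ℝ), ∀ ε : ℝ, 0 < ε → ε ≤ ε₀ →
    ∃ φ : X → X, Set.MapsTo φ (Metric.ball x ε) (Metric.ball x' ε) ∧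
      Measurable ((Metric.ball x ε).restrict φ) ∧
      ∀ z ∈ Metric.ball x ε, ∀ᵐ y ∂μ, dist (φ z) y = dist z y

/-- The equivalence relation `x ∼_μ x'`. -/
def SimEq {X : Type*} [MetricSpace X] [MeasurableSpace X] (μ : Measure X) (x x' : X) : Prop :=
  LeadsTo μ x x' ∧ LeadsTo μ x' x

/-- The equivalence class `[x]_μ`. -/
def eqClass {X : Type*} [MetricSpace X] [MeasurableSpace X] (μ : Measure X) (x : X) : Set X :=
  {x' : X | SimEq μ x x'}

open Metric Set
open scoped NNReal ENNReal

section Equicontinuity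

variable {ι X β : Type*} [PseudoMetricSpace X] [PseudoMetricSpace β] {F : ι → X → β}

theorem equicontinuous_of_lipschitzOnWith_closedBall (x₀ : X)
    (h : ∀ R, ∃ K, ∀ i, LipschitzOnWith K (F i) (closedBall x₀ R)) : Equicontinuous F := by
  intro x
  obtain ⟨K, hK⟩ := h (dist x x₀ + 1)
  have hx : closedBall x₀ (dist x x₀ + 1) ∈ 𝓝 x :=
    closedBall_mem_nhds_of_mem (mem_ball.2 (lt_add_one _))
  have hxK := (LipschitzOnWith.uniformEquicontinuousOn F K hK).equicontinuousOn x
    (mem_of_mem_nhds hx)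
  intro U hU
  simpa only [nhdsWithin_eq_nhds.2 hx] using hxK U hU

theorem Equicontinuous.tendstoLocallyUniformly_of_dense [LocallyCompactSpace X] {l : Filter ι}
    {f : X → β} {D : Set X} (hF : Equicontinuous F) (hf : Continuous f) (hD : Dense D)
    (hconv : ∀ x ∈ D, Tendsto (F · x) l (𝓝 (f x))) : TendstoLocallyUniformly F f l := by
  have hpt : ∀ x, Tendsto (F · x) l (𝓝 (f x)) := fun x =>
    closure_minimal hconv (hF.isClosed_setOfPred_tendsto hf) (hD.closure_eq ▸ mem_univ x)
  rw [tendstoLocallyUniformly_iff_forall_isCompact]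
  intro K hK
  have hKF := (EquicontinuousOn.tendsto_uniformOnFun_iff_pi' (𝔖 := {K}) (by simpa using hK)
    (by simpa using hF.equicontinuousOn K) l f).2 (by
      rw [sUnion_singleton]
      exact tendsto_pi_nhds.2 fun x => hpt x)
  exact UniformOnFun.tendsto_iff_tendstoUniformlyOn.1 hKF K rfl

end Equicontinuity

section ArgminStability

variable {X : Type*} [MetricSpace X]

theorem rho_nonneg (C C' : Set X) : 0 ≤ rho C C' :=
  Real.iSup_nonneg fun _ => Real.iSup_nonneg fun _ => infDist_nonneg

theorem rho_le {C C' : Set X} {ε : ℝ} (hε : 0 ≤ ε) (h : ∀ x ∈ C, infDist x C' ≤ ε) :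
    rho C C' ≤ ε :=
  Real.iSup_le (fun x => Real.iSup_le (h x) hε) hε

theorem exists_isMinOn_of_sublevel_subset {g : X → ℝ} (hg : Continuous g) {S : Set X}
    (hS : IsClosed S) (hne : S.Nonempty)
    (hsub : ∀ B, ∃ K, IsCompact K ∧ ∀ x, g x ≤ B → x ∈ K) : ∃ x ∈ S, IsMinOn g S x := by
  obtain ⟨x₀, hx₀⟩ := hne
  obtain ⟨K, hK, hgK⟩ := hsub (g x₀)
  refine hg.continuousOn.exists_isMinOn' hS hx₀ ?_
  filter_upwards [mem_inf_of_left hK.compl_mem_cocompact] with x hx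
  exact le_of_not_ge fun h => hx (hgK x h)

theorem exists_pos_add_le_of_le_infDist {g : X → ℝ} (hg : Continuous g) {S K : Set X}
    (hS : IsClosed S) (hK : IsCompact K) {x₀ : X} (hmin : IsMinOn g S x₀) {ε : ℝ} (hε : 0 < ε) :
    ∃ δ > 0, ∀ x ∈ K ∩ S, ε ≤ infDist x {z ∈ S | IsMinOn g S z} → g x₀ + δ ≤ g x := by
  set K' := K ∩ S ∩ {x | ε ≤ infDist x {z ∈ S | IsMinOn g S z}}
  have hK' : IsCompact K' :=
    (hK.inter_right hS).inter_right (isClosed_le continuous_const (continuous_infDist_pt _))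
  rcases K'.eq_empty_or_nonempty with hempty | hne
  · exact ⟨1, one_pos, fun x hx hxε => (eq_empty_iff_forall_notMem.1 hempty x ⟨hx, hxε⟩).elim⟩
  obtain ⟨z, ⟨⟨-, hzS⟩, hzε⟩, hz⟩ := hK'.exists_isMinOn hne hg.continuousOn
  have hlt : g x₀ < g z := by
    refine (hmin hzS).lt_of_ne fun heq => ?_
    have hzmin : IsMinOn g S z := fun y hy => heq ▸ hmin hy
    have hz0 : infDist z {z ∈ S | IsMinOn g S z} = 0 := infDist_zero_of_mem ⟨hzS, hzmin⟩
    exact hε.not_ge (hz0 ▸ hzε)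
  exact ⟨g z - g x₀, sub_pos.2 hlt, fun x hx hxε => by
    linarith [isMinOn_iff.1 hz x ⟨hx, hxε⟩]⟩

theorem TendstoLocallyUniformly.eventually_exists_lt_of_mem_kurLi {f : ℕ → X → ℝ} {g : X → ℝ}
    (hfg : TendstoLocallyUniformly f g atTop) {x : X} (hg : ContinuousAt g x)
    {Sn : ℕ → Set X} (hx : x ∈ KurLi Sn) {η : ℝ} (hη : 0 < η) :
    ∀ᶠ n in atTop, ∃ y ∈ Sn n, f n y < g x + η := by
  obtain ⟨t, ht, hft⟩ := Metric.tendstoLocallyUniformly_iff.1 hfg (η / 2) (half_pos hη) x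
  have hgx : ∀ᶠ y in 𝓝 x, g y < g x + η / 2 :=
    hg.eventually (gt_mem_nhds (by linarith))
  obtain ⟨r, hr, hrt⟩ := Metric.mem_nhds_iff.1 (inter_mem ht hgx)
  filter_upwards [hft, hx r hr] with n hn ⟨y, hy, hxy⟩
  have hyr : y ∈ t ∩ {y | g y < g x + η / 2} := hrt (mem_ball'.2 hxy)
  have hfy := hn y hyr.1
  have hgy : g y < g x + η / 2 := hyr.2
  rw [Real.dist_eq, abs_lt] at hfy
  exact ⟨y, hy, by linarith⟩

theorem tendsto_rho_argmin {f : ℕ → X → ℝ} {g : X → ℝ} (hg : Continuous g)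
    (hfg : TendstoLocallyUniformly f g atTop)
    (hsub : ∀ B, ∃ K, IsCompact K ∧ ∀ᶠ n in atTop, ∀ x, f n x ≤ B → x ∈ K)
    {S : Set X} {Sn : ℕ → Set X} (hS : IsClosed S) (hSn : ∀ n, Sn n ⊆ S)
    {x₀ : X} (hmin : IsMinOn g S x₀) (hx₀ : x₀ ∈ KurLi Sn) :
    Tendsto (fun n => rho {x ∈ Sn n | IsMinOn (f n) (Sn n) x} {x ∈ S | IsMinOn g S x})
      atTop (𝓝 0) := by
  suffices h : ∀ ε > 0, ∀ᶠ n in atTop, ∀ x ∈ Sn n, IsMinOn (f n) (Sn n) x →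
      infDist x {x ∈ S | IsMinOn g S x} ≤ ε by
    refine tendsto_order.2 ⟨fun a ha => .of_forall fun n => ha.trans_le (rho_nonneg _ _),
      fun a ha => ?_⟩
    filter_upwards [h (a / 2) (half_pos ha)] with n hn
    exact (rho_le (half_pos ha).le fun x hx => hn x hx.1 hx.2).trans_lt (half_lt_self ha)
  intro ε hε
  obtain ⟨K, hK, hfK⟩ := hsub (g x₀ + 1)
  obtain ⟨δ, hδ, hgap⟩ := exists_pos_add_le_of_le_infDist hg hS hK hmin hε
  set η := min (δ / 2) 1
  have hη : 0 < η := lt_min (half_pos hδ) one_pos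
  have hunif := Metric.tendstoUniformlyOn_iff.1
    ((tendstoLocallyUniformlyOn_iff_tendstoUniformlyOn_of_compact hK).1
      hfg.tendstoLocallyUniformlyOn) η hη
  filter_upwards [hfK, hunif, hfg.eventually_exists_lt_of_mem_kurLi hg.continuousAt hx₀ hη]
    with n hnK hnunif ⟨y, hy, hfy⟩ x hx hxmin
  have hfx : f n x < g x₀ + η := (isMinOn_iff.1 hxmin y hy).trans_lt hfy
  have hxK : x ∈ K := hnK x (by linarith [min_le_right (δ / 2) 1])
  have hgx := hnunif x hxK
  rw [Real.dist_eq, abs_lt] at hgx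
  by_contra! hfar
  linarith [hgap x ⟨hxK, hSn n hx⟩ hfar.le, min_le_left (δ / 2) 1]

end ArgminStability

section FrechetFunction

variable {X : Type*} [MetricSpace X] [MeasurableSpace X] {p : ℝ}

theorem abs_rpow_sub_rpow_le {a b : ℝ} (hp : 1 ≤ p) (ha : 0 ≤ a) (hb : 0 ≤ b) :
    |a ^ p - b ^ p| ≤ p * max a b ^ (p - 1) * |a - b| := by
  have hmvt := (convex_Icc 0 (max a b)).norm_image_sub_le_of_norm_hasDerivWithin_le
    (f := fun t => t ^ p) (f' := fun t => p * t ^ (p - 1))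
    (fun t _ => (Real.hasDerivAt_rpow_const (Or.inr hp)).hasDerivWithinAt)
    (fun t ht => by
      rw [Real.norm_eq_abs, abs_of_nonneg (mul_nonneg (by linarith) (Real.rpow_nonneg ht.1 _))]
      exact mul_le_mul_of_nonneg_left (Real.rpow_le_rpow ht.1 ht.2 (by linarith)) (by linarith))
    ⟨hb, le_max_right a b⟩ ⟨ha, le_max_left a b⟩
  simpa only [Real.norm_eq_abs] using hmvt

theorem add_rpow_le_two_rpow_mul {a b : ℝ} (hp : 1 ≤ p) (ha : 0 ≤ a) (hb : 0 ≤ b) :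
    (a + b) ^ p ≤ 2 ^ (p - 1) * (a ^ p + b ^ p) := by
  lift a to ℝ≥0 using ha
  lift b to ℝ≥0 using hb
  exact_mod_cast NNReal.rpow_add_le_mul_rpow_add_rpow a b hp

theorem rpow_sub_one_le_one_add_rpow {t : ℝ} (hp : 1 ≤ p) (ht : 0 ≤ t) :
    t ^ (p - 1) ≤ 1 + t ^ p := by
  rcases le_total t 1 with h | h
  · linarith [Real.rpow_le_one ht h (by linarith : 0 ≤ p - 1), Real.rpow_nonneg ht p]
  · linarith [Real.rpow_le_rpow_of_exponent_le h (by linarith : p - 1 ≤ p)]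

theorem fp_nonneg (ν : Measure X) (x : X) : 0 ≤ fp p ν x :=
  integral_nonneg fun _ => Real.rpow_nonneg dist_nonneg p

variable [OpensMeasurableSpace X]

theorem integrable_dist_add_rpow_sub_one (hp : 1 ≤ p) {ν : Measure X} [IsFiniteMeasure ν]
    (hν : MemPp p ν) (z : X) {R : ℝ} (hR : 0 ≤ R) :
    Integrable (fun y => (dist z y + R) ^ (p - 1)) ν := by
  refine Integrable.mono' (((integrable_const 1).add
    (((hν z).add (integrable_const (R ^ p))).const_mul (2 ^ (p - 1)))))
    (((continuous_const.dist continuous_id).add continuous_const).rpow_const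
      fun _ => Or.inr (by linarith)).aestronglyMeasurable (.of_forall fun y => ?_)
  rw [Real.norm_eq_abs, abs_of_nonneg (by positivity)]
  calc (dist z y + R) ^ (p - 1) ≤ 1 + (dist z y + R) ^ p :=
        rpow_sub_one_le_one_add_rpow hp (by positivity)
    _ ≤ 1 + 2 ^ (p - 1) * (dist z y ^ p + R ^ p) := by
        gcongr; exact add_rpow_le_two_rpow_mul hp dist_nonneg hR

theorem lipschitzOnWith_fp (hp : 1 ≤ p) {ν : Measure X} [IsFiniteMeasure ν] (hν : MemPp p ν)
    (z : X) {R : ℝ} (hR : 0 ≤ R) :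
    LipschitzOnWith (p * ∫ y, (dist z y + R) ^ (p - 1) ∂ν).toNNReal (fp p ν)
      (closedBall z R) := by
  have hw := integrable_dist_add_rpow_sub_one hp hν z hR
  refine LipschitzOnWith.of_dist_le_mul fun x hx x' hx' => ?_
  rw [Real.coe_toNNReal _ (by positivity), Real.dist_eq, fp, fp,
    ← integral_sub (hν x) (hν x'), mul_assoc, mul_comm _ (dist x x'), ← mul_assoc,
    ← integral_const_mul]
  refine (abs_integral_le_integral_abs).trans (integral_mono ((hν x).sub (hν x')).abs
    (hw.const_mul _) fun y => ?_)
  have hmax : max (dist x y) (dist x' y) ≤ dist z y + R := max_le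
    (by linarith [dist_triangle_left x y z, mem_closedBall'.1 hx])
    (by linarith [dist_triangle_left x' y z, mem_closedBall'.1 hx'])
  calc |dist x y ^ p - dist x' y ^ p|
      ≤ p * max (dist x y) (dist x' y) ^ (p - 1) * |dist x y - dist x' y| :=
        abs_rpow_sub_rpow_le hp dist_nonneg dist_nonneg
    _ ≤ p * (dist z y + R) ^ (p - 1) * dist x x' := by
        gcongr ?_ * ?_ * ?_
        · exact Real.rpow_le_rpow (le_max_of_le_left dist_nonneg) hmax (by linarith)
        · exact abs_dist_sub_le x x' y
    _ = p * dist x x' * (dist z y + R) ^ (p - 1) := by ring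

theorem equicontinuous_fp {ι : Type*} (hp : 1 ≤ p) {ν : ι → Measure X}
    [∀ i, IsFiniteMeasure (ν i)] (hν : ∀ i, MemPp p (ν i)) (x₀ : X)
    (hbdd : ∀ q : ℕ, BddAbove (range fun i => ∫ y, (dist x₀ y + q) ^ (p - 1) ∂ν i)) :
    Equicontinuous fun i => fp p (ν i) := by
  refine equicontinuous_of_lipschitzOnWith_closedBall x₀ fun R => ?_
  obtain ⟨C, hC⟩ := hbdd ⌈R⌉₊
  refine ⟨(p * C).toNNReal, fun i => ?_⟩
  refine ((lipschitzOnWith_fp hp (hν i) x₀ (Nat.cast_nonneg _)).weaken ?_).mono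
    (closedBall_subset_closedBall (Nat.le_ceil R))
  exact Real.toNNReal_le_toNNReal
    (mul_le_mul_of_nonneg_left (hC ⟨i, rfl⟩) (by linarith))

theorem continuous_fp (hp : 1 ≤ p) {μ : Measure X} [IsFiniteMeasure μ] (hμ : MemPp p μ) :
    Continuous (fp p μ) :=
  continuous_iff_continuousAt.2 fun x => ((equicontinuous_fp (ν := fun _ : Unit => μ) hp
    (fun _ => hμ) x fun _ => (finite_range _).bddAbove).continuous ()).continuousAt

theorem measureReal_ball_mul_le_fp (hp : 0 ≤ p) {ν : Measure X} [IsFiniteMeasure ν]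
    (hν : MemPp p ν) {x₀ x : X} {T : ℝ} (hT : T ≤ dist x x₀) :
    ν.real (ball x₀ T) * (dist x x₀ - T) ^ p ≤ fp p ν x := by
  rw [← smul_eq_mul, ← integral_indicator_const _ measurableSet_ball]
  refine integral_mono ((integrable_const _).indicator measurableSet_ball) (hν x) fun y => ?_
  by_cases hy : y ∈ ball x₀ T
  · rw [indicator_of_mem hy]
    exact Real.rpow_le_rpow (by linarith) (by linarith [dist_triangle x y x₀, mem_ball.1 hy]) hp
  · rw [indicator_of_notMem hy]
    exact Real.rpow_nonneg dist_nonneg p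

theorem dist_le_of_fp_le (hp : 0 < p) {ν : Measure X} [IsFiniteMeasure ν] (hν : MemPp p ν)
    {x₀ x : X} {T c B : ℝ} (hc : 0 < c) (hcν : c ≤ ν.real (ball x₀ T)) (hB : fp p ν x ≤ B) :
    dist x x₀ ≤ T + (B / c) ^ p⁻¹ := by
  have hBc : 0 ≤ B / c := div_nonneg ((fp_nonneg ν x).trans hB) hc.le
  rcases le_or_gt (dist x x₀) T with hxT | hTx
  · linarith [Real.rpow_nonneg hBc p⁻¹]
  have hlow := measureReal_ball_mul_le_fp hp.le hν hTx.le
  have hpow : (dist x x₀ - T) ^ p ≤ B / c := by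
    rw [le_div_iff₀' hc]
    exact (mul_le_mul_of_nonneg_right hcν (Real.rpow_nonneg (by linarith) p)).trans
      (hlow.trans hB)
  linarith [(Real.le_rpow_inv_iff_of_pos (by linarith) hBc hp).2 hpow]

end FrechetFunction

section EmpiricalMeasure

variable {X Ω : Type*} [MeasurableSpace X] (Y : ℕ → Ω → X) (ω : Ω)

instance (n : ℕ) : IsProbabilityMeasure (empMeasure Y (n + 1) ω) := by
  constructor
  simp [empMeasure, ENNReal.inv_mul_cancel]

variable [MeasurableSingletonClass X]

theorem empMeasure_pos_iff {n : ℕ} {s : Set X} :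
    0 < empMeasure Y n ω s ↔ ∃ i < n, Y i ω ∈ s := by
  simp [empMeasure, Measure.dirac_apply, pos_iff_ne_zero, Finset.sum_eq_zero_iff]

theorem integral_empMeasure (n : ℕ) (g : X → ℝ) :
    ∫ y, g y ∂empMeasure Y n ω = (∑ i ∈ Finset.range n, g (Y i ω)) / n := by
  rw [empMeasure, integral_smul_measure,
    integral_finsetSum_measure fun i _ => integrable_dirac enorm_lt_top]
  simp [integral_dirac, div_eq_inv_mul]

theorem integrable_empMeasure (n : ℕ) (g : X → ℝ) : Integrable g (empMeasure Y (n + 1) ω) :=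
  (integrable_finsetSum_measure.2 fun i _ => integrable_dirac enorm_lt_top).smul_measure
    (by simp)

end EmpiricalMeasure

section Support

variable {X : Type*} [MetricSpace X] [MeasurableSpace X]

theorem msupport_eq_support (μ : Measure X) : msupport μ = μ.support := by
  ext x
  simp only [msupport, Measure.support_eq_forall_isOpen, mem_ofPred_eq]
  exact ⟨fun h U hxU hU => h U hU hxU, fun h U hU hxU => h U hxU hU⟩

theorem measureReal_ball_pos_of_mem_msupport {μ : Measure X} [IsFiniteMeasure μ] {x : X}
    (hx : x ∈ msupport μ) {r : ℝ} (hr : 0 < r) : 0 < μ.real (ball x r) :=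
  ENNReal.toReal_pos (hx _ isOpen_ball (mem_ball_self hr)).ne' (measure_ne_top μ _)

variable [MeasurableSingletonClass X] {Ω : Type*} (Y : ℕ → Ω → X) (ω : Ω)

theorem msupport_empMeasure (n : ℕ) :
    msupport (empMeasure Y n ω) = (fun i => Y i ω) '' Iio n := by
  refine Subset.antisymm (fun x hx => ?_) ?_
  · by_contra hxn
    have hclosed : IsClosed ((fun i => Y i ω) '' Iio n) := ((finite_Iio n).image _).isClosed
    obtain ⟨i, hi, hYi⟩ := (empMeasure_pos_iff Y ω).1 (hx _ hclosed.isOpen_compl hxn)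
    exact hYi ⟨i, hi, rfl⟩
  · rintro _ ⟨i, hi, rfl⟩ U - hU
    exact (empMeasure_pos_iff Y ω).2 ⟨i, hi, hU⟩

theorem memPp_empMeasure (p : ℝ) (n : ℕ) : MemPp p (empMeasure Y (n + 1) ω) :=
  fun _ => integrable_empMeasure Y ω n _

end Support

section StrongLaw

variable {X Ω : Type*} [MetricSpace X] [MeasurableSpace X] [OpensMeasurableSpace X]
  [MeasurableSpace Ω]
  {P : Measure Ω} {Y : ℕ → Ω → X} {μ : Measure X}

theorem ae_tendsto_integral_empMeasure (hY : ∀ i, Measurable (Y i)) (hindep : iIndepFun Y P)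
    (hlaw : ∀ i, P.map (Y i) = μ) {g : X → ℝ} (hg : Measurable g) (hgμ : Integrable g μ) :
    ∀ᵐ ω ∂P, Tendsto (fun n => ∫ y, g y ∂empMeasure Y n ω) atTop (𝓝 (∫ y, g y ∂μ)) := by
  have hident : ∀ i, IdentDistrib (fun ω => g (Y i ω)) (fun ω => g (Y 0 ω)) P P := fun i =>
    (IdentDistrib.mk (hY i).aemeasurable (hY 0).aemeasurable (by rw [hlaw, hlaw])).comp hg
  have hint : Integrable (fun ω => g (Y 0 ω)) P := by
    rw [← hlaw 0] at hgμ
    exact hgμ.comp_measurable (hY 0)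
  have hmean : ∫ ω, g (Y 0 ω) ∂P = ∫ y, g y ∂μ := by
    rw [← hlaw 0, integral_map (hY 0).aemeasurable hg.aestronglyMeasurable]
  filter_upwards [strong_law_ae_real (fun i ω => g (Y i ω)) hint
    (fun i j hij => (hindep.indepFun hij).comp hg hg) hident] with ω hω
  simpa only [integral_empMeasure, hmean] using hω

theorem ae_tendsto_measureReal_empMeasure [IsFiniteMeasure μ] (hY : ∀ i, Measurable (Y i))
    (hindep : iIndepFun Y P) (hlaw : ∀ i, P.map (Y i) = μ) {s : Set X} (hs : MeasurableSet s) :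
    ∀ᵐ ω ∂P, Tendsto (fun n => (empMeasure Y n ω).real s) atTop (𝓝 (μ.real s)) := by
  filter_upwards [ae_tendsto_integral_empMeasure hY hindep hlaw (measurable_one.indicator hs)
    ((integrable_const 1).indicator hs)] with ω hω
  simpa only [integral_indicator_one hs] using hω

end StrongLaw

section EmpiricalFrechet

variable {X Ω : Type*} [MetricSpace X] [MeasurableSpace X] [OpensMeasurableSpace X]
  [MeasurableSpace Ω]
  {P : Measure Ω} {Y : ℕ → Ω → X} {μ : Measure X} {p : ℝ}

theorem exists_isMinOn_fp [ProperSpace X] (hp : 1 ≤ p) [IsFiniteMeasure μ] (hμ : MemPp p μ)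
    {x₀ : X} (hx₀ : x₀ ∈ msupport μ) {S : Set X} (hS : IsClosed S) (hne : S.Nonempty) :
    ∃ x ∈ S, IsMinOn (fp p μ) S x := by
  have hm := measureReal_ball_pos_of_mem_msupport hx₀ one_pos
  refine exists_isMinOn_of_sublevel_subset (continuous_fp hp hμ) hS hne fun B =>
    ⟨_, isCompact_closedBall x₀ (1 + (B / μ.real (ball x₀ 1)) ^ p⁻¹), fun x hx =>
      mem_closedBall.2 (dist_le_of_fp_le (by linarith) hμ hm le_rfl hx)⟩

theorem ae_tendstoLocallyUniformly_fp [ProperSpace X] [Nonempty X] (hp : 1 ≤ p)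
    [IsFiniteMeasure μ] (hμ : MemPp p μ) (hY : ∀ i, Measurable (Y i)) (hindep : iIndepFun Y P)
    (hlaw : ∀ i, P.map (Y i) = μ) :
    ∀ᵐ ω ∂P, TendstoLocallyUniformly (fun n => fp p (empMeasure Y (n + 1) ω)) (fp p μ) atTop := by
  obtain ⟨D, hDc, hD⟩ := TopologicalSpace.exists_countable_dense X
  obtain ⟨x₀⟩ := ‹Nonempty X›
  have hdist : ∀ z : X, Measurable fun y : X => dist z y ^ p := fun z =>
    (measurable_const.dist measurable_id).pow_const p
  have hweight : ∀ q : ℕ, Measurable fun y : X => (dist x₀ y + q) ^ (p - 1) := fun q =>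
    ((measurable_const.dist measurable_id).add_const _).pow_const _
  have hconvD : ∀ᵐ ω ∂P, ∀ d ∈ D, Tendsto (fun n => fp p (empMeasure Y n ω) d) atTop
      (𝓝 (fp p μ d)) :=
    (ae_ball_iff hDc).2 fun d _ => ae_tendsto_integral_empMeasure hY hindep hlaw (hdist d) (hμ d)
  have hconvW : ∀ᵐ ω ∂P, ∀ q : ℕ, Tendsto (fun n => ∫ y, (dist x₀ y + q) ^ (p - 1)
      ∂empMeasure Y n ω) atTop (𝓝 (∫ y, (dist x₀ y + q) ^ (p - 1) ∂μ)) :=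
    ae_all_iff.2 fun q => ae_tendsto_integral_empMeasure hY hindep hlaw (hweight q)
      (integrable_dist_add_rpow_sub_one hp hμ x₀ q.cast_nonneg)
  filter_upwards [hconvD, hconvW] with ω hωD hωW
  refine (equicontinuous_fp hp (fun n => memPp_empMeasure Y ω p n) x₀ fun q =>
    ((hωW q).comp (tendsto_add_atTop_nat 1)).bddAbove_range).tendstoLocallyUniformly_of_dense
    (continuous_fp hp hμ) hD fun d hd => (hωD d hd).comp (tendsto_add_atTop_nat 1)

theorem ae_eventually_sublevel_fp_subset_isCompact [ProperSpace X] (hp : 0 < p)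
    [IsFiniteMeasure μ] {x₀ : X} (hx₀ : x₀ ∈ msupport μ) (hY : ∀ i, Measurable (Y i))
    (hindep : iIndepFun Y P) (hlaw : ∀ i, P.map (Y i) = μ) :
    ∀ᵐ ω ∂P, ∀ B, ∃ K, IsCompact K ∧
      ∀ᶠ n in atTop, ∀ x, fp p (empMeasure Y (n + 1) ω) x ≤ B → x ∈ K := by
  have hm := measureReal_ball_pos_of_mem_msupport hx₀ one_pos
  filter_upwards [ae_tendsto_measureReal_empMeasure hY hindep hlaw measurableSet_ball]
    with ω hω B
  refine ⟨_, isCompact_closedBall x₀ (1 + (B / (μ.real (ball x₀ 1) / 2)) ^ p⁻¹), ?_⟩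
  filter_upwards [(hω.comp (tendsto_add_atTop_nat 1)).eventually
    (eventually_ge_nhds (half_lt_self hm))] with n hn x hx
  exact mem_closedBall.2 (dist_le_of_fp_le hp (memPp_empMeasure Y ω p n) (half_pos hm) hn hx)

theorem ae_mem_kurLi_msupport_empMeasure [IsFiniteMeasure μ] {x : X} (hx : x ∈ msupport μ)
    (hY : ∀ i, Measurable (Y i)) (hindep : iIndepFun Y P) (hlaw : ∀ i, P.map (Y i) = μ) :
    ∀ᵐ ω ∂P, x ∈ KurLi fun n => msupport (empMeasure Y (n + 1) ω) := by
  filter_upwards [ae_all_iff.2 fun k : ℕ =>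
    ae_tendsto_measureReal_empMeasure hY hindep hlaw (measurableSet_ball (x := x)
      (ε := 1 / (k + 1)))] with ω hω ε hε
  obtain ⟨k, hk⟩ := exists_nat_one_div_lt hε
  filter_upwards [((hω k).comp (tendsto_add_atTop_nat 1)).eventually (eventually_gt_nhds
    (measureReal_ball_pos_of_mem_msupport hx Nat.one_div_pos_of_nat))] with n hn
  obtain ⟨i, hi, hYi⟩ := (empMeasure_pos_iff Y ω).1 (ENNReal.toReal_pos_iff.1 hn).1
  rw [msupport_empMeasure]
  exact ⟨Y i ω, ⟨i, hi, rfl⟩, (mem_ball'.1 hYi).trans hk⟩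

theorem ae_msupport_empMeasure_subset [SecondCountableTopology X] (hY : ∀ i, Measurable (Y i))
    (hlaw : ∀ i, P.map (Y i) = μ) :
    ∀ᵐ ω ∂P, ∀ n, msupport (empMeasure Y n ω) ⊆ msupport μ := by
  have hYsupp : ∀ i, ∀ᵐ ω ∂P, Y i ω ∈ msupport μ := fun i => by
    have hsupp : ∀ᵐ y ∂P.map (Y i), y ∈ μ.support := by
      rw [hlaw]
      exact Measure.support_mem_ae
    rw [msupport_eq_support]
    exact (ae_map_iff (hY i).aemeasurable Measure.isClosed_support.measurableSet).1 hsupp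
  filter_upwards [ae_all_iff.2 hYsupp] with ω hω n
  rw [msupport_empMeasure]
  rintro _ ⟨i, -, rfl⟩
  exact hω i

end EmpiricalFrechet

theorem frechet_stmt15_general {X : Type*} [MetricSpace X]
    [MeasurableSpace X] [BorelSpace X]
    (hHB : ∀ s : Set X, IsClosed s → Bornology.IsBounded s → IsCompact s)
    (p : ℝ) (hp : 1 ≤ p)
    (μ : Measure X) (hμprob : IsProbabilityMeasure μ) (hμPp : MemPp p μ)
    {Ω : Type*} [MeasurableSpace Ω] (P : Measure Ω)
    (Y : ℕ → Ω → X) (hYmeas : ∀ i, Measurable (Y i))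
    (hindep : iIndepFun Y P)
    (hlaw : ∀ i, Measure.map (Y i) P = μ) :
    ∀ᵐ ω ∂P,
      Tendsto (fun n => rho (Fp p (empMeasure Y (n + 1) ω) Set.univ) (Fp p μ Set.univ))
        atTop (𝓝 0) ∧
      Tendsto (fun n =>
          rho (Fp p (empMeasure Y (n + 1) ω) (msupport (empMeasure Y (n + 1) ω)))
            (Fp p μ (msupport μ)))
        atTop (𝓝 0) := by
  have : ProperSpace X := ⟨fun x r => hHB _ isClosed_closedBall isBounded_closedBall⟩
  obtain ⟨x₀, hx₀⟩ : (msupport μ).Nonempty :=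
    msupport_eq_support μ ▸ Measure.nonempty_support (IsProbabilityMeasure.ne_zero μ)
  have : Nonempty X := ⟨x₀⟩
  have hsupp : IsClosed (msupport μ) := msupport_eq_support μ ▸ Measure.isClosed_support
  obtain ⟨xF, -, hxF⟩ := exists_isMinOn_fp hp hμPp hx₀ isClosed_univ univ_nonempty
  obtain ⟨xG, hxGsupp, hxG⟩ := exists_isMinOn_fp hp hμPp hx₀ hsupp ⟨x₀, hx₀⟩
  filter_upwards [ae_tendstoLocallyUniformly_fp hp hμPp hYmeas hindep hlaw,
    ae_eventually_sublevel_fp_subset_isCompact (by linarith) hx₀ hYmeas hindep hlaw,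
    ae_mem_kurLi_msupport_empMeasure hxGsupp hYmeas hindep hlaw,
    ae_msupport_empMeasure_subset hYmeas hlaw] with ω hunif hsub hxGlim hsuppn
  exact ⟨tendsto_rho_argmin (continuous_fp hp hμPp) hunif hsub isClosed_univ
      (fun _ => subset_univ _) hxF fun ε hε => .of_forall fun _ => ⟨xF, mem_univ _, by simpa⟩,
    tendsto_rho_argmin (continuous_fp hp hμPp) hunif hsub hsupp (fun n => hsuppn (n + 1)) hxG
      hxGlim⟩

theorem frechet_stmt15 {X : Type*} [MetricSpace X] [TopologicalSpace.SeparableSpace X]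
    [MeasurableSpace X] [BorelSpace X]
    (hHB : ∀ s : Set X, IsClosed s → Bornology.IsBounded s → IsCompact s)
    (p : ℝ) (hp : 1 ≤ p)
    (μ : Measure X) (hμprob : IsProbabilityMeasure μ) (hμPp : MemPp p μ)
    {Ω : Type*} [MeasurableSpace Ω] (P : Measure Ω) (hPprob : IsProbabilityMeasure P)
    (Y : ℕ → Ω → X) (hYmeas : ∀ i, Measurable (Y i))
    (hindep : iIndepFun Y P)
    (hlaw : ∀ i, Measure.map (Y i) P = μ) :
    ∀ᵐ ω ∂P,
      Tendsto (fun n => rho (Fp p (empMeasure Y (n + 1) ω) Set.univ) (Fp p μ Set.univ))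
        atTop (𝓝 0) ∧
      Tendsto (fun n =>
          rho (Fp p (empMeasure Y (n + 1) ω) (msupport (empMeasure Y (n + 1) ω)))
            (Fp p μ (msupport μ)))
        atTop (𝓝 0) :=
  frechet_stmt15_general hHB p hp μ hμprob hμPp P Y hYmeas hindep hlaw
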